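/- arXiv:math/0203209 — 4 statements merged into one kernel-verified Lean document; each statement's English description precedes it below -/
import Mathlib

section
/- The Moyal product is independent of the choice of linear coordinates preserving ω: if S : Matrix (Fin m) (Fin m) ℝ satisfies Σ_{l,l'} S i l · ω l l' · S j l' = ω i j for all i, j, and S♯ denotes the algebra endomorphism of MvPolynomial (Fin m) ℝ sending the variable y_i to Σ_j S i j · y_j, extended coefficientwise to PowerSeries (MvPolynomial (Fin m) ℝ), then S♯(U) ⋆ S♯(V) = S♯(U ⋆ V) for all U, V. -/
noncomputable section

/-- Iterated partial derivative `∂_{i 1} ⋯ ∂_{i k} u` of a multivariate polynomial. -/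
def iterPDeriv {m k : ℕ} (i : Fin k → Fin m) (u : MvPolynomial (Fin m) ℝ) :
    MvPolynomial (Fin m) ℝ :=
  (List.ofFn i).foldl (fun p t => MvPolynomial.pderiv t p) u

/-- The `k`-th Moyal bidifferential operator
`C_k(u,v) = Σ_{i,j : Fin k → Fin m} (Π_t ω (i t) (j t)) • (∂_{i} u) · (∂_{j} v)`. -/
def moyalC {m : ℕ} (ω : Fin m → Fin m → ℝ) (k : ℕ)
    (u v : MvPolynomial (Fin m) ℝ) : MvPolynomial (Fin m) ℝ :=
  ∑ i : Fin k → Fin m, ∑ j : Fin k → Fin m,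
    (∏ t, ω (i t) (j t)) • (iterPDeriv i u * iterPDeriv j v)

/-- The Moyal product of formal power series with polynomial coefficients:
`U ⋆ V = Σ_n (Σ_{a+b+k=n} (1/(2^k k!)) • C_k(u_a, v_b)) λ^n`. -/
def moyal {m : ℕ} (ω : Fin m → Fin m → ℝ)
    (U V : PowerSeries (MvPolynomial (Fin m) ℝ)) :
    PowerSeries (MvPolynomial (Fin m) ℝ) :=
  PowerSeries.mk fun n =>
    ∑ p ∈ Finset.HasAntidiagonal.antidiagonal n, ∑ q ∈ Finset.HasAntidiagonal.antidiagonal p.2,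
      (1 / ((2 ^ q.2 * Nat.factorial q.2 : ℕ) : ℝ)) •
        moyalC ω q.2 (PowerSeries.coeff p.1 U) (PowerSeries.coeff q.1 V)

/-- The linear change of coordinates `y_i ↦ Σ_j S i j • y_j`, as an algebra
endomorphism of `MvPolynomial (Fin m) ℝ`. -/
def linSubst {m : ℕ} (S : Matrix (Fin m) (Fin m) ℝ) :
    MvPolynomial (Fin m) ℝ →ₐ[ℝ] MvPolynomial (Fin m) ℝ :=
  MvPolynomial.aeval fun i => ∑ j, S i j • MvPolynomial.X j

namespace MoyalAux

open MvPolynomial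

variable {m : ℕ}

/-- Bundled iterated derivative along a list. -/
def iterL (l : List (Fin m)) : MvPolynomial (Fin m) ℝ →ₗ[ℝ] MvPolynomial (Fin m) ℝ :=
  l.foldl (fun L t => (pderiv t).comp L) LinearMap.id

lemma iterL_gen (l : List (Fin m)) (L : MvPolynomial (Fin m) ℝ →ₗ[ℝ] MvPolynomial (Fin m) ℝ)
    (u : MvPolynomial (Fin m) ℝ) :
    (l.foldl (fun L t => (pderiv t).comp L) L) u
      = l.foldl (fun p t => pderiv t p) (L u) := by
  induction l generalizing L with
  | nil => rfl
  | cons a l ih => simp [List.foldl_cons, ih]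

lemma iterPDeriv_eq {k : ℕ} (i : Fin k → Fin m) (u : MvPolynomial (Fin m) ℝ) :
    iterPDeriv i u = iterL (List.ofFn i) u := by
  rw [iterL, iterL_gen]; rfl

lemma chain (S : Matrix (Fin m) (Fin m) ℝ) (l : Fin m) (u : MvPolynomial (Fin m) ℝ) :
    pderiv l (linSubst S u) = ∑ i, S i l • linSubst S (pderiv i u) := by
  induction u using MvPolynomial.induction_on with
  | C a => simp [linSubst]
  | add p q hp hq => simp [map_add, hp, hq, Finset.sum_add_distrib, smul_add]
  | mul_X p j hp =>
    have hXj : linSubst S (X j) = ∑ n, S j n • X n := by simp [linSubst]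
    have hdXj : pderiv l (linSubst S (X j)) = MvPolynomial.C (S j l) := by
      rw [hXj, map_sum]
      simp [Pi.single_apply, smul_ite, Finset.sum_ite_eq, MvPolynomial.smul_eq_C_mul]
    rw [map_mul, pderiv_mul, hp, hdXj]
    have key : ∀ i : Fin m, pderiv i (p * X j)
        = pderiv i p * X j + if i = j then p else 0 := by
      intro i
      rw [pderiv_mul, pderiv_X, Pi.single_apply]
      split <;> simp_all [eq_comm]
    simp only [key, map_add, apply_ite (linSubst S), map_zero, smul_add,
      Finset.sum_add_distrib, map_mul]
    rw [Finset.sum_mul]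
    congr 1
    · exact Finset.sum_congr rfl fun x _ => smul_mul_assoc _ _ _
    · rw [Finset.sum_eq_single j] <;>
        simp +contextual [MvPolynomial.smul_eq_C_mul, mul_comm]

lemma iterPDeriv_succ {k : ℕ} (j : Fin (k+1) → Fin m) (u : MvPolynomial (Fin m) ℝ) :
    iterPDeriv j u = iterPDeriv (Fin.tail j) (pderiv (j 0) u) := by
  simp only [iterPDeriv, List.ofFn_succ, List.foldl_cons]
  rfl

lemma sum_pi_succ {α : Type*} [AddCommMonoid α] {k : ℕ}
    (f : (Fin (k+1) → Fin m) → α) :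
    ∑ i : Fin (k+1) → Fin m, f i
      = ∑ i0 : Fin m, ∑ it : Fin k → Fin m, f (Fin.cons i0 it) := by
  rw [← (Fin.consEquiv (fun _ => Fin m)).sum_comp f, Fintype.sum_prod_type]
  rfl

lemma iter_chain (S : Matrix (Fin m) (Fin m) ℝ) {k : ℕ} (j : Fin k → Fin m)
    (u : MvPolynomial (Fin m) ℝ) :
    iterPDeriv j (linSubst S u)
      = ∑ i : Fin k → Fin m, (∏ t, S (i t) (j t)) • linSubst S (iterPDeriv i u) := by
  induction k generalizing u with
  | zero => simp [iterPDeriv, Finset.univ_unique]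
  | succ k ih =>
    rw [iterPDeriv_succ, chain, iterPDeriv_eq, map_sum]
    simp only [map_smul, ← iterPDeriv_eq, ih]
    rw [sum_pi_succ (fun i => (∏ t, S (i t) (j t)) • linSubst S (iterPDeriv i u))]
    refine Finset.sum_congr rfl fun i0 _ => ?_
    rw [Finset.smul_sum]
    refine Finset.sum_congr rfl fun it _ => ?_
    rw [smul_smul, Fin.prod_univ_succ]
    simp only [iterPDeriv_succ, Fin.cons_zero, Fin.tail_cons]
    rfl

lemma key_scalar (ω : Fin m → Fin m → ℝ) (S : Matrix (Fin m) (Fin m) ℝ)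
    (hS : ∀ i j, ∑ l, ∑ l', S i l * ω l l' * S j l' = ω i j)
    {k : ℕ} (i i' : Fin k → Fin m) :
    ∑ j : Fin k → Fin m, ∑ j' : Fin k → Fin m,
      (∏ t, S (i t) (j t)) * ((∏ t, ω (j t) (j' t)) * ∏ t, S (i' t) (j' t))
      = ∏ t, ω (i t) (i' t) := by
  have h1 : ∀ j : Fin k → Fin m,
      ∑ j' : Fin k → Fin m,
        (∏ t, S (i t) (j t)) * ((∏ t, ω (j t) (j' t)) * ∏ t, S (i' t) (j' t))
      = ∏ t, ∑ l', S (i t) (j t) * ω (j t) l' * S (i' t) l' := by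
    intro j
    rw [Finset.prod_univ_sum]
    rw [Fintype.piFinset_univ]
    refine Finset.sum_congr rfl fun j' _ => ?_
    rw [← Finset.prod_mul_distrib, ← Finset.prod_mul_distrib]
    exact Finset.prod_congr rfl fun t _ => by ring
  simp only [h1]
  rw [← Fintype.piFinset_univ, ← Finset.prod_univ_sum
    (fun _ : Fin k => (Finset.univ : Finset (Fin m)))
    (fun t v => ∑ l', S (i t) v * ω v l' * S (i' t) l')]
  exact Finset.prod_congr rfl fun t _ => hS _ _

lemma sum4 {ι κ M : Type*} [Fintype ι] [Fintype κ] [AddCommMonoid M]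
    (F : ι → ι → κ → κ → M) :
    ∑ a : κ, ∑ b : κ, ∑ c : ι, ∑ d : ι, F c d a b
      = ∑ c : ι, ∑ d : ι, ∑ a : κ, ∑ b : κ, F c d a b := by
  calc ∑ a : κ, ∑ b : κ, ∑ c : ι, ∑ d : ι, F c d a b
      = ∑ a : κ, ∑ c : ι, ∑ b : κ, ∑ d : ι, F c d a b :=
        Finset.sum_congr rfl fun a _ => Finset.sum_comm
    _ = ∑ c : ι, ∑ a : κ, ∑ b : κ, ∑ d : ι, F c d a b := Finset.sum_comm
    _ = ∑ c : ι, ∑ a : κ, ∑ d : ι, ∑ b : κ, F c d a b :=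
        Finset.sum_congr rfl fun c _ => Finset.sum_congr rfl fun a _ => Finset.sum_comm
    _ = ∑ c : ι, ∑ d : ι, ∑ a : κ, ∑ b : κ, F c d a b :=
        Finset.sum_congr rfl fun c _ => Finset.sum_comm

lemma moyalC_inv (ω : Fin m → Fin m → ℝ) (S : Matrix (Fin m) (Fin m) ℝ)
    (hS : ∀ i j, ∑ l, ∑ l', S i l * ω l l' * S j l' = ω i j) (k : ℕ)
    (u v : MvPolynomial (Fin m) ℝ) :
    moyalC ω k (linSubst S u) (linSubst S v) = linSubst S (moyalC ω k u v) := by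
  unfold moyalC
  simp only [map_sum, map_smul, map_mul]
  simp only [iter_chain S, Finset.sum_mul_sum, smul_mul_smul_comm, Finset.smul_sum, smul_smul]
  rw [sum4 (ι := Fin k → Fin m) (κ := Fin k → Fin m)
    (F := fun i i' j j' => ((∏ t, ω (j t) (j' t)) *
      ((∏ t, S (i t) (j t)) * ∏ t, S (i' t) (j' t))) •
      (linSubst S (iterPDeriv i u) * linSubst S (iterPDeriv i' v)))]
  refine Finset.sum_congr rfl fun i _ => Finset.sum_congr rfl fun i' _ => ?_
  rw [← key_scalar ω S hS i i', Finset.sum_smul]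
  refine Finset.sum_congr rfl fun j _ => ?_
  rw [Finset.sum_smul]
  refine Finset.sum_congr rfl fun j' _ => ?_
  congr 1
  ring

end MoyalAux

/-- The Moyal product is invariant under linear changes of coordinates
preserving `ω`. -/
theorem moyal_linear_invariance {m : ℕ} (ω : Fin m → Fin m → ℝ)
    (hω : ∀ i j, ω i j = - ω j i)
    (S : Matrix (Fin m) (Fin m) ℝ)
    (hS : ∀ i j, ∑ l, ∑ l', S i l * ω l l' * S j l' = ω i j)
    (U V : PowerSeries (MvPolynomial (Fin m) ℝ)) :
    moyal ω (PowerSeries.map (linSubst S).toRingHom U)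
        (PowerSeries.map (linSubst S).toRingHom V)
      = PowerSeries.map (linSubst S).toRingHom (moyal ω U V) := by
  have hC := MoyalAux.moyalC_inv ω S hS
  refine PowerSeries.ext fun n => ?_
  simp only [moyal, PowerSeries.coeff_mk, PowerSeries.coeff_map]
  rw [map_sum ((linSubst S).toRingHom)]
  refine Finset.sum_congr rfl fun p _ => ?_
  rw [map_sum ((linSubst S).toRingHom)]
  refine Finset.sum_congr rfl fun q _ => ?_
  have hcoe : ∀ x : MvPolynomial (Fin m) ℝ, (linSubst S).toRingHom x = linSubst S x :=
    fun _ => rfl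
  simp only [hcoe]
  rw [map_smul, hC]
end
end

section
/- For the Moyal product, the star-commutator with a quadratic polynomial equals λ times the Poisson bracket: if q ∈ MvPolynomial (Fin m) ℝ has total degree at most 2, then for every V = Σ_b v_b λ^b in PowerSeries (MvPolynomial (Fin m) ℝ), q ⋆ V − V ⋆ q = λ · Σ_b {q, v_b} λ^b, where q is regarded as a constant power series. -/
noncomputable section

/-- The Poisson bracket `{u,v} = Σ_{i,j} ω i j • (∂_i u) · (∂_j v)`. -/
def poissonBracket {m : ℕ} (ω : Fin m → Fin m → ℝ)
    (u v : MvPolynomial (Fin m) ℝ) : MvPolynomial (Fin m) ℝ :=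
  ∑ i, ∑ j, ω i j • (MvPolynomial.pderiv i u * MvPolynomial.pderiv j v)

open MvPolynomial

lemma deg_pderiv {m : ℕ} (i : Fin m) (p : MvPolynomial (Fin m) ℝ) {n : ℕ}
    (h : p.totalDegree ≤ n + 1) : (pderiv i p).totalDegree ≤ n := by
  conv_lhs => rw [p.as_sum]
  rw [map_sum]
  apply totalDegree_finsetSum_le
  intro d hd
  rw [pderiv_monomial]
  rcases eq_or_ne (d i) 0 with h0 | h0
  · simp [h0]
  · refine (totalDegree_monomial_le _ _).trans ?_
    have hsum : (d - Finsupp.single i 1).sum (fun _ e => e) + 1 = d.sum fun _ e => e := by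
      have : d = (d - Finsupp.single i 1) + Finsupp.single i 1 := by
        ext j
        rcases eq_or_ne j i with rfl | hj
        · simp [Nat.sub_add_cancel (Nat.one_le_iff_ne_zero.mpr h0)]
        · simp [hj, Finsupp.single_eq_of_ne (Ne.symm hj)]
      conv_rhs => rw [this]
      rw [Finsupp.sum_add_index (by simp) (by intros; rfl)]
      simp
    have h2 := le_totalDegree hd
    simp only [Function.id_def] at *
    have := h2
    omega

lemma pderiv_eq_zero_of_deg_zero {m : ℕ} (i : Fin m) (p : MvPolynomial (Fin m) ℝ)
    (h : p.totalDegree = 0) : pderiv i p = 0 := by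
  apply pderiv_eq_zero_of_notMem_vars
  intro hv
  rw [mem_vars] at hv
  obtain ⟨d, hd, hid⟩ := hv
  exact absurd ((totalDegree_eq_zero_iff _ p).mp h d hd i) (Finsupp.mem_support_iff.mp hid)

lemma foldl_pderiv_zero {m : ℕ} (l : List (Fin m)) :
    l.foldl (fun p t => pderiv t p) (0 : MvPolynomial (Fin m) ℝ) = 0 := by
  induction l with
  | nil => rfl
  | cons a tl ih => simpa using ih

lemma foldl_pderiv_eq_zero {m : ℕ} (l : List (Fin m)) (p : MvPolynomial (Fin m) ℝ)
    (h : p.totalDegree < l.length) :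
    l.foldl (fun p t => pderiv t p) p = 0 := by
  induction l generalizing p with
  | nil => simp at h
  | cons a tl ih =>
    simp only [List.foldl_cons]
    rcases Nat.eq_zero_or_pos tl.length with h0 | h0
    · have : p.totalDegree = 0 := by simp [h0] at h; omega
      rw [pderiv_eq_zero_of_deg_zero a p this]
      exact foldl_pderiv_zero tl
    · apply ih
      have : p.totalDegree ≤ (tl.length - 1) + 1 := by
        simp only [List.length_cons] at h; omega
      have := deg_pderiv a p this
      omega

lemma iterPDeriv_zero {m k : ℕ} (i : Fin k → Fin m) : iterPDeriv i (0 : MvPolynomial (Fin m) ℝ) = 0 :=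
  foldl_pderiv_zero _

lemma iterPDeriv_eq_zero {m k : ℕ} (i : Fin k → Fin m) (p : MvPolynomial (Fin m) ℝ)
    (h : p.totalDegree < k) : iterPDeriv i p = 0 := by
  apply foldl_pderiv_eq_zero
  simpa using h

lemma moyalC_zero_left {m : ℕ} (ω : Fin m → Fin m → ℝ) (k : ℕ) (v : MvPolynomial (Fin m) ℝ) :
    moyalC ω k 0 v = 0 := by
  simp [moyalC, iterPDeriv_zero]

lemma moyalC_zero_right {m : ℕ} (ω : Fin m → Fin m → ℝ) (k : ℕ) (u : MvPolynomial (Fin m) ℝ) :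
    moyalC ω k u 0 = 0 := by
  simp [moyalC, iterPDeriv_zero]

lemma moyalC_swap {m : ℕ} (ω : Fin m → Fin m → ℝ) (hω : ∀ i j, ω i j = - ω j i) (k : ℕ)
    (u v : MvPolynomial (Fin m) ℝ) :
    moyalC ω k v u = ((-1 : ℝ) ^ k) • moyalC ω k u v := by
  unfold moyalC
  rw [Finset.smul_sum, Finset.sum_comm]
  refine Finset.sum_congr rfl fun j _ => ?_
  rw [Finset.smul_sum]
  refine Finset.sum_congr rfl fun i _ => ?_
  rw [smul_smul]
  have : (∏ t, ω (j t) (i t)) = (-1 : ℝ) ^ k * ∏ t, ω (i t) (j t) := by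
    calc (∏ t, ω (j t) (i t)) = ∏ t : Fin k, (-1) * ω (i t) (j t) := by
          refine Finset.prod_congr rfl fun t _ => ?_
          rw [hω]; ring
      _ = (-1 : ℝ) ^ k * ∏ t, ω (i t) (j t) := by
          rw [Finset.prod_mul_distrib]; simp
  rw [this, ← mul_assoc, ← mul_pow, mul_comm (iterPDeriv i v) (iterPDeriv j u)]
  norm_num

lemma moyalC_big {m : ℕ} (ω : Fin m → Fin m → ℝ) (k : ℕ) (hk : 3 ≤ k)
    (q v : MvPolynomial (Fin m) ℝ) (hq : q.totalDegree ≤ 2) :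
    moyalC ω k q v = 0 := by
  unfold moyalC
  refine Finset.sum_eq_zero fun i _ => Finset.sum_eq_zero fun j _ => ?_
  rw [iterPDeriv_eq_zero i q (by omega), zero_mul, smul_zero]

lemma moyalC_one {m : ℕ} (ω : Fin m → Fin m → ℝ) (u v : MvPolynomial (Fin m) ℝ) :
    moyalC ω 1 u v = poissonBracket ω u v := by
  unfold moyalC poissonBracket
  rw [← Equiv.sum_comp ((Equiv.funUnique (Fin 1) (Fin m)).symm)]
  refine Finset.sum_congr rfl fun x _ => ?_
  rw [← Equiv.sum_comp ((Equiv.funUnique (Fin 1) (Fin m)).symm)]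
  refine Finset.sum_congr rfl fun y _ => ?_
  simp [iterPDeriv, List.ofFn_succ, Equiv.funUnique, Fin.prod_univ_one]


/-- For a polynomial `q` of total degree at most 2, the Moyal star-commutator
with `q` equals `λ` times the Poisson bracket with `q`. -/
theorem moyal_comm_quadratic {m : ℕ} (ω : Fin m → Fin m → ℝ)
    (hω : ∀ i j, ω i j = - ω j i)
    (q : MvPolynomial (Fin m) ℝ) (hq : q.totalDegree ≤ 2)
    (V : PowerSeries (MvPolynomial (Fin m) ℝ)) :
    moyal ω (PowerSeries.C q) V - moyal ω V (PowerSeries.C q)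
      = PowerSeries.X *
          PowerSeries.mk (fun b => poissonBracket ω q (PowerSeries.coeff b V)) := by
  unfold moyal
  apply PowerSeries.ext
  intro n
  rw [map_sub, PowerSeries.coeff_mk, PowerSeries.coeff_mk]
  have hL : (∑ p ∈ Finset.HasAntidiagonal.antidiagonal n, ∑ r ∈ Finset.HasAntidiagonal.antidiagonal p.2,
      (1 / ((2 ^ r.2 * Nat.factorial r.2 : ℕ) : ℝ)) •
        moyalC ω r.2 (PowerSeries.coeff p.1 (PowerSeries.C q)) (PowerSeries.coeff r.1 V))
      = ∑ r ∈ Finset.HasAntidiagonal.antidiagonal n,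
          (1 / ((2 ^ r.2 * Nat.factorial r.2 : ℕ) : ℝ)) •
            moyalC ω r.2 q (PowerSeries.coeff r.1 V) := by
    rw [Finset.sum_eq_single_of_mem ((0 : ℕ), n) (by simp)]
    · simp [PowerSeries.coeff_C]
    · intro p hp hne
      have hp1 : p.1 ≠ 0 := by
        rw [Finset.HasAntidiagonal.mem_antidiagonal] at hp
        rintro h0
        apply hne
        rw [Prod.ext_iff]
        omega
      simp [PowerSeries.coeff_C, hp1, moyalC_zero_left]
  have hR : (∑ p ∈ Finset.HasAntidiagonal.antidiagonal n, ∑ r ∈ Finset.HasAntidiagonal.antidiagonal p.2,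
      (1 / ((2 ^ r.2 * Nat.factorial r.2 : ℕ) : ℝ)) •
        moyalC ω r.2 (PowerSeries.coeff p.1 V) (PowerSeries.coeff r.1 (PowerSeries.C q)))
      = ∑ p ∈ Finset.HasAntidiagonal.antidiagonal n,
          (1 / ((2 ^ p.2 * Nat.factorial p.2 : ℕ) : ℝ)) •
            moyalC ω p.2 (PowerSeries.coeff p.1 V) q := by
    refine Finset.sum_congr rfl fun p hp => ?_
    rw [Finset.sum_eq_single_of_mem ((0 : ℕ), p.2) (by simp)]
    · simp [PowerSeries.coeff_C]
    · intro r hr hne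
      have hr1 : r.1 ≠ 0 := by
        rw [Finset.HasAntidiagonal.mem_antidiagonal] at hr
        rintro h0
        apply hne
        rw [Prod.ext_iff]
        omega
      simp [PowerSeries.coeff_C, hr1, moyalC_zero_right]
  rw [hL, hR, ← Finset.sum_sub_distrib]
  rcases Nat.eq_zero_or_pos n with rfl | hn
  · rw [PowerSeries.coeff_zero_X_mul]
    apply Finset.sum_eq_zero
    intro r hr
    rw [Finset.HasAntidiagonal.mem_antidiagonal] at hr
    have h2 : r.2 = 0 := by omega
    rw [← smul_sub, moyalC_swap ω hω r.2 q ((PowerSeries.coeff r.1) V), h2]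
    simp
  · obtain ⟨n', rfl⟩ : ∃ n', n = n' + 1 := ⟨n - 1, by omega⟩
    rw [PowerSeries.coeff_succ_X_mul, PowerSeries.coeff_mk]
    rw [Finset.sum_eq_single_of_mem ((n', 1)) (by simp [Finset.mem_antidiagonal])]
    · rw [← smul_sub, moyalC_swap ω hω 1 q ((PowerSeries.coeff (n', 1).1) V), moyalC_one]
      norm_num
      module
    · intro r hr hne
      have hk : r.2 ≠ 1 := by
        rw [Finset.HasAntidiagonal.mem_antidiagonal] at hr
        rintro h1
        apply hne
        rw [Prod.ext_iff]
        omega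
      rw [← smul_sub, moyalC_swap ω hω r.2 q ((PowerSeries.coeff r.1) V)]
      rcases Nat.even_or_odd r.2 with he | ho
      · rw [he.neg_one_pow, one_smul, sub_self, smul_zero]
      · have h3 : 3 ≤ r.2 := by
          rcases ho with ⟨c, hc⟩
          omega
        rw [moyalC_big ω r.2 h3 q _ hq]
        simp
end
end

section
/- If quantum moment maps are unique, a G-equivalence maps the quantum moment map to the quantum moment map: assume g is perfect (g = ⁅g,g⁆) and λ is regular on A₂; let Φ₁, Φ₂ be quantum moment maps for (A₁, ρ₁) and (A₂, ρ₂) respectively, and let T : A₁ ≃ A₂ be an R-algebra isomorphism that is equivariant (T(ρ₁(X)(a)) = ρ₂(X)(T a) for all X, a). Then T(Φ₁ X) = Φ₂ X for all X ∈ g. -/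
noncomputable section

/-- `R = ℂ[[λ]]`, the ring of formal power series over `ℂ`. -/
abbrev Rl : Type := PowerSeries ℂ

/-- The formal parameter `λ`. -/
def lam : Rl := PowerSeries.X

/-- `ρ : g → Der(A)` is an action of the `ℂ`-Lie algebra `g` on the `R`-algebra `A`
by `R`-linear derivations, i.e. a `ℂ`-Lie-algebra homomorphism into the Lie algebra
of `R`-linear derivations of `A`. -/
def IsDerAction {g A : Type*} [LieRing g] [LieAlgebra ℂ g]
    [Ring A] [Algebra Rl A] (ρ : g → A →ₗ[Rl] A) : Prop :=
  (∀ X (a b : A), ρ X (a * b) = ρ X a * b + a * ρ X b) ∧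
  (∀ X Y, ρ (X + Y) = ρ X + ρ Y) ∧
  (∀ (c : ℂ) X (a : A), ρ (c • X) a = algebraMap ℂ Rl c • ρ X a) ∧
  (∀ X Y (a : A), ρ ⁅X, Y⁆ a = ρ X (ρ Y a) - ρ Y (ρ X a))

/-- A quantum moment map for the action `ρ` of `g` on `A`: a `ℂ`-linear map
`Φ : g → A` with `Φ(X)Φ(Y) − Φ(Y)Φ(X) = λ • Φ(⁅X,Y⁆)` and
`Φ(X)a − aΦ(X) = λ • ρ(X)(a)`. -/
def IsQMM {g A : Type*} [LieRing g] [LieAlgebra ℂ g]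
    [Ring A] [Algebra Rl A] [Module ℂ A] [IsScalarTower ℂ Rl A]
    (ρ : g → A →ₗ[Rl] A) (Φ : g →ₗ[ℂ] A) : Prop :=
  (∀ X Y, Φ X * Φ Y - Φ Y * Φ X = lam • Φ ⁅X, Y⁆) ∧
  (∀ X (a : A), Φ X * a - a * Φ X = lam • ρ X a)

/-- If quantum moment maps are unique (`g` perfect, `λ` regular), a
`G`-equivalence maps the quantum moment map to the quantum moment map. -/
theorem equivariant_equivalence_maps_qmm_to_qmm
    {g A₁ A₂ : Type*} [LieRing g] [LieAlgebra ℂ g]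
    [Ring A₁] [Algebra Rl A₁] [Module ℂ A₁] [IsScalarTower ℂ Rl A₁]
    [Ring A₂] [Algebra Rl A₂] [Module ℂ A₂] [IsScalarTower ℂ Rl A₂]
    (hperf : Submodule.span ℂ {z : g | ∃ X Y : g, ⁅X, Y⁆ = z} = ⊤)
    (ρ₁ : g → A₁ →ₗ[Rl] A₁) (ρ₂ : g → A₂ →ₗ[Rl] A₂)
    (hρ₁ : IsDerAction ρ₁) (hρ₂ : IsDerAction ρ₂)
    (hreg : Function.Injective fun a : A₂ => lam • a)
    (Φ₁ : g →ₗ[ℂ] A₁) (Φ₂ : g →ₗ[ℂ] A₂)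
    (hΦ₁ : IsQMM ρ₁ Φ₁) (hΦ₂ : IsQMM ρ₂ Φ₂)
    (T : A₁ ≃ₐ[Rl] A₂)
    (hT : ∀ (X : g) (a : A₁), T (ρ₁ X a) = ρ₂ X (T a)) :
    ∀ X : g, T (Φ₁ X) = Φ₂ X := by
  -- Ψ := T ∘ Φ₁ satisfies the same commutator relation as Φ₂
  have hΨcomm : ∀ (X : g) (a : A₂),
      T (Φ₁ X) * a - a * T (Φ₁ X) = lam • ρ₂ X a := by
    intro X a
    have h := hΦ₁.2 X (T.symm a)
    have := congrArg T h
    simpa [map_mul, map_sub, map_smul, hT] using this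
  -- hence D X := T (Φ₁ X) - Φ₂ X is central
  have hcen : ∀ (X : g) (a : A₂),
      (T (Φ₁ X) - Φ₂ X) * a = a * (T (Φ₁ X) - Φ₂ X) := by
    intro X a
    have h1 := hΨcomm X a
    have h2 := hΦ₂.2 X a
    have : T (Φ₁ X) * a - a * T (Φ₁ X) = Φ₂ X * a - a * Φ₂ X := h1.trans h2.symm
    rw [sub_mul, mul_sub, sub_eq_sub_iff_sub_eq_sub]
    exact this
  -- key: equality on brackets
  have hkey : ∀ X Y : g, T (Φ₁ ⁅X, Y⁆) = Φ₂ ⁅X, Y⁆ := by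
    intro X Y
    apply hreg
    show lam • T (Φ₁ ⁅X, Y⁆) = lam • Φ₂ ⁅X, Y⁆
    have e1 : lam • T (Φ₁ ⁅X, Y⁆) = T (Φ₁ X) * T (Φ₁ Y) - T (Φ₁ Y) * T (Φ₁ X) := by
      have := congrArg T (hΦ₁.1 X Y)
      simpa [map_mul, map_sub, map_smul] using this.symm
    have e2 : lam • Φ₂ ⁅X, Y⁆ = Φ₂ X * Φ₂ Y - Φ₂ Y * Φ₂ X := (hΦ₂.1 X Y).symm
    have e3 : T (Φ₁ X) * T (Φ₁ Y) - T (Φ₁ Y) * T (Φ₁ X)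
        = lam • ρ₂ X (T (Φ₁ Y)) := hΨcomm X (T (Φ₁ Y))
    have e4 : Φ₂ X * Φ₂ Y - Φ₂ Y * Φ₂ X = lam • ρ₂ X (Φ₂ Y) := hΦ₂.2 X (Φ₂ Y)
    -- lam • ρ₂ X (D Y) = 0 since D Y is central
    have e5 : lam • ρ₂ X (T (Φ₁ Y) - Φ₂ Y) = 0 := by
      have h := hΨcomm X (T (Φ₁ Y) - Φ₂ Y)
      rw [← h, hcen Y (T (Φ₁ X)), sub_self]
    have e6 : ρ₂ X (T (Φ₁ Y)) = ρ₂ X (Φ₂ Y) + ρ₂ X (T (Φ₁ Y) - Φ₂ Y) := by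
      rw [← map_add]; congr 1; abel
    rw [e1, e2, e3, e4, e6, smul_add, e5, add_zero]
  -- conclude by perfectness
  intro X
  have hXtop : X ∈ Submodule.span ℂ {z : g | ∃ X Y : g, ⁅X, Y⁆ = z} := by
    rw [hperf]; trivial
  have hker : Submodule.span ℂ {z : g | ∃ X Y : g, ⁅X, Y⁆ = z}
      ≤ LinearMap.ker (((T.toLinearMap.restrictScalars ℂ).comp Φ₁) - Φ₂) := by
    rw [Submodule.span_le]
    rintro z ⟨X, Y, rfl⟩
    simp [LinearMap.mem_ker, hkey X Y]
  have := hker hXtop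
  simpa [LinearMap.mem_ker, sub_eq_zero] using this
end
end

section
/- The only equivariant linear map giving an SO(3)-invariant connection on the sphere S²_r is zero: fix r ≠ 0 and set ρ = !![0, −r⁻¹; r, 0] ∈ Matrix (Fin 2) (Fin 2) ℝ (the linear isotropy representation of σ_x at the origin in canonical Darboux coordinates). Let m = Submodule.span ℝ {e₂, e₃} ⊆ ℝ³ with the cross-product bracket. If Λ : m →ₗ[ℝ] Matrix (Fin 2) (Fin 2) ℝ satisfies the equivariance condition Λ(e₁ ×ᵥ v) = ρ·Λ(v) − Λ(v)·ρ for all v ∈ m, then Λ = 0. -/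
/-!
On `m = span {e₂, e₃}` the bracket with `e₁` is the rotation `e₂ ↦ e₃ ↦ -e₂`, so equivariance gives
`Λ e₃ = ⁅ρ, Λ e₂⁆` and `⁅ρ, Λ e₃⁆ = -Λ e₂`, i.e. `ad_ρ² (Λ e₂) = -Λ e₂`. Since `ρ² = c • 1` is a
scalar, `ad_ρ² = 2c - 2 L_ρ R_ρ` with `(L_ρ R_ρ)² = c²`, so the only eigenvalues of `ad_ρ²` are
`0` and `4c`. Here `c = -(r⁻¹ * r)` and `4c ≠ -1`, hence `Λ e₂ = 0`, and then `Λ e₃ = 0`.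
-/

theorem eq_zero_of_lie_lie_eq_neg {K R : Type*} [Field K] [Ring R] [Algebra K R]
    {ρ A : R} {c : K} (hρ : ρ * ρ = c • 1) (hc : 4 * c + 1 ≠ 0) (h : ⁅ρ, ⁅ρ, A⁆⁆ = -A) :
    A = 0 := by
  have hconj : ∀ X : R, ρ * (ρ * X * ρ) * ρ = (c * c) • X := by
    intro X
    calc ρ * (ρ * X * ρ) * ρ = (ρ * ρ) * X * (ρ * ρ) := by noncomm_ring
      _ = (c * c) • X := by rw [hρ, smul_mul_assoc, one_mul, mul_smul_comm, mul_one, smul_smul]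
  have hsandwich : (2 : K) • (ρ * A * ρ) = (2 * c + 1) • A := by
    have hexp : ⁅ρ, ⁅ρ, A⁆⁆ = (ρ * ρ) * A - (2 : K) • (ρ * A * ρ) + A * (ρ * ρ) := by
      rw [ofNat_smul_eq_nsmul]; simp only [Ring.lie_def]; noncomm_ring
    rw [hexp, hρ, smul_mul_assoc, one_mul, mul_smul_comm, mul_one] at h
    linear_combination (norm := module) -h
  have hsandwich_conj : (2 * c * c) • A = (2 * c + 1) • (ρ * A * ρ) := by
    have := congrArg (fun X => ρ * X * ρ) hsandwich
    simp only [mul_smul_comm, smul_mul_assoc, hconj] at this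
    linear_combination (norm := module) this
  have hsmul : (4 * c + 1) • A = 0 := by
    linear_combination (norm := module) -((2 * c + 1) • hsandwich + (2 : K) • hsandwich_conj)
  exact (smul_eq_zero.mp hsmul).resolve_left hc

theorem LinearMap.eq_zero_of_span_pair {R M N : Type*} [Semiring R] [AddCommMonoid M] [Module R M]
    [AddCommMonoid N] [Module R N] {x y : M} (f : Submodule.span R {x, y} →ₗ[R] N)
    (hx : f ⟨x, Submodule.subset_span (Set.mem_insert x _)⟩ = 0)
    (hy : f ⟨y, Submodule.subset_span (Set.mem_insert_of_mem x rfl)⟩ = 0) : f = 0 := by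
  refine LinearMap.ext_on Submodule.span_span_coe_preimage ?_
  rintro ⟨v, hv⟩ (rfl | rfl : v = x ∨ v = y)
  exacts [hx, hy]

theorem isotropy_mul_self_eq_smul_one (r : ℝ) :
    !![0, -r⁻¹; r, 0] * !![0, -r⁻¹; r, 0] = (-(r⁻¹ * r)) • (1 : Matrix (Fin 2) (Fin 2) ℝ) := by
  ext i j; fin_cases i <;> fin_cases j <;> simp [mul_comm]

theorem so3_invariant_connection_unique_general
    (r : ℝ)
    (Λ : (Submodule.span ℝ {(![0, 1, 0] : Fin 3 → ℝ), (![0, 0, 1] : Fin 3 → ℝ)})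
          →ₗ[ℝ] Matrix (Fin 2) (Fin 2) ℝ)
    (hΛ : ∀ (v : Fin 3 → ℝ)
        (hv : v ∈ Submodule.span ℝ {(![0, 1, 0] : Fin 3 → ℝ), (![0, 0, 1] : Fin 3 → ℝ)})
        (hv' : crossProduct (![1, 0, 0] : Fin 3 → ℝ) v ∈
          Submodule.span ℝ {(![0, 1, 0] : Fin 3 → ℝ), (![0, 0, 1] : Fin 3 → ℝ)}),
        Λ ⟨crossProduct (![1, 0, 0] : Fin 3 → ℝ) v, hv'⟩
          = !![0, -r⁻¹; r, 0] * Λ ⟨v, hv⟩ - Λ ⟨v, hv⟩ * !![0, -r⁻¹; r, 0]) :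
    Λ = 0 := by
  have he₂ : (![0, 1, 0] : Fin 3 → ℝ) ∈ Submodule.span ℝ {![0, 1, 0], ![0, 0, 1]} :=
    Submodule.subset_span (Set.mem_insert _ _)
  have he₃ : (![0, 0, 1] : Fin 3 → ℝ) ∈ Submodule.span ℝ {![0, 1, 0], ![0, 0, 1]} :=
    Submodule.subset_span (Set.mem_insert_of_mem _ rfl)
  have hcross₂ : crossProduct ![1, 0, 0] ![0, 1, 0] = (![0, 0, 1] : Fin 3 → ℝ) := by
    simp [cross_apply]
  have hcross₃ : crossProduct ![1, 0, 0] ![0, 0, 1] = (-![0, 1, 0] : Fin 3 → ℝ) := by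
    simp [cross_apply]
  set ρ : Matrix (Fin 2) (Fin 2) ℝ := !![0, -r⁻¹; r, 0]
  set A := Λ ⟨_, he₂⟩
  have hB : Λ ⟨_, he₃⟩ = ⁅ρ, A⁆ := by
    rw [Ring.lie_def, ← hΛ _ he₂ (hcross₂ ▸ he₃)]
    exact congrArg Λ (Subtype.ext hcross₂.symm)
  have hA : ⁅ρ, Λ ⟨_, he₃⟩⁆ = -A := by
    rw [Ring.lie_def, ← hΛ _ he₃ (hcross₃ ▸ neg_mem he₂), ← map_neg]
    exact congrArg Λ (Subtype.ext hcross₃)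
  have hc : 4 * -(r⁻¹ * r) + 1 ≠ 0 := by
    rcases eq_or_ne r 0 with rfl | hr <;> norm_num [*]
  have hA₀ : A = 0 := eq_zero_of_lie_lie_eq_neg (isotropy_mul_self_eq_smul_one r) hc (hB ▸ hA)
  exact LinearMap.eq_zero_of_span_pair Λ hA₀
    (by rw [hB, hA₀, Ring.lie_def, mul_zero, zero_mul, sub_zero])

/-- The only linear map `Λ : m → gl(2,ℝ)` equivariant for the linear isotropy
representation `ρ = !![0, -r⁻¹; r, 0]` of `σ_x` (where `m = span {e₂, e₃}` is
the reductive complement in `so(3) ≅ (ℝ³, ×ᵥ)`) is zero; hence the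
`SO(3)`-invariant connection on `S²_r` is unique. -/
theorem so3_invariant_connection_unique
    (r : ℝ) (hr : r ≠ 0)
    (Λ : (Submodule.span ℝ {(![0, 1, 0] : Fin 3 → ℝ), (![0, 0, 1] : Fin 3 → ℝ)})
          →ₗ[ℝ] Matrix (Fin 2) (Fin 2) ℝ)
    (hΛ : ∀ (v : Fin 3 → ℝ)
        (hv : v ∈ Submodule.span ℝ {(![0, 1, 0] : Fin 3 → ℝ), (![0, 0, 1] : Fin 3 → ℝ)})
        (hv' : crossProduct (![1, 0, 0] : Fin 3 → ℝ) v ∈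
          Submodule.span ℝ {(![0, 1, 0] : Fin 3 → ℝ), (![0, 0, 1] : Fin 3 → ℝ)}),
        Λ ⟨crossProduct (![1, 0, 0] : Fin 3 → ℝ) v, hv'⟩
          = !![0, -r⁻¹; r, 0] * Λ ⟨v, hv⟩ - Λ ⟨v, hv⟩ * !![0, -r⁻¹; r, 0]) :
    Λ = 0 :=
  so3_invariant_connection_unique_general r Λ hΛ
end
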